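/- For α > 0 and every r > 0, the scalar curvature satisfies the strict lower bound R_α(r) > 8/(π²α²). -/

import Mathlib

/-!
Write `φ = warp α`. Since `φ' = α² / (α² + r²)`, we have `-φ'' = 2 r φ'² / α²`, and `φ < r`
gives `-2φ''/φ > 4φ'²/α²`. Since `φ < απ/2`, also `(1 - φ'²)/φ² > 4(1 - φ'²)/(π²α²)`.
Adding, `R_α/2 > 4(π²φ'² + 1 - φ'²)/(π²α²) ≥ 4/(π²α²)`.
-/

open Real

/-- Warping function `φ_α(r) = α · arctan(r/α)`. -/
noncomputable def warp (α : ℝ) : ℝ → ℝ := fun r => α * arctan (r / α)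

/-- Scalar curvature of the rotationally symmetric metric `dr² + φ_α(r)² g_{S²}`:
`R_α(r) = 2(−2φ_α''(r)/φ_α(r) + (1 − φ_α'(r)²)/φ_α(r)²)`. -/
noncomputable def scalarCurv (α : ℝ) : ℝ → ℝ := fun r =>
  2 * (-2 * deriv (deriv (warp α)) r / warp α r
        + (1 - (deriv (warp α) r) ^ 2) / (warp α r) ^ 2)

lemma arctan_lt_self {x : ℝ} (hx : 0 < x) : arctan x < x := by
  simpa using lt_tan (arctan_pos.mpr hx) (arctan_lt_pi_div_two x)

lemma warp_pos {α r : ℝ} (hα : 0 < α) (hr : 0 < r) : 0 < warp α r :=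
  mul_pos hα (arctan_pos.mpr (div_pos hr hα))

lemma warp_lt_self {α r : ℝ} (hα : 0 < α) (hr : 0 < r) : warp α r < r := by
  have h := mul_lt_mul_of_pos_left (arctan_lt_self (div_pos hr hα)) hα
  rwa [mul_div_cancel₀ r hα.ne'] at h

lemma warp_lt_mul_pi_div_two {α : ℝ} (hα : 0 < α) (r : ℝ) : warp α r < α * (π / 2) :=
  mul_lt_mul_of_pos_left (arctan_lt_pi_div_two _) hα

lemma hasDerivAt_warp {α : ℝ} (hα : α ≠ 0) (r : ℝ) :
    HasDerivAt (warp α) (α ^ 2 / (α ^ 2 + r ^ 2)) r := by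
  have h := (((hasDerivAt_id r).div_const α).arctan).const_mul α
  refine h.congr_deriv ?_
  have : α ^ 2 + r ^ 2 ≠ 0 := by positivity
  field_simp
  simp

lemma deriv_warp {α : ℝ} (hα : α ≠ 0) :
    deriv (warp α) = fun r => α ^ 2 / (α ^ 2 + r ^ 2) :=
  funext fun r => (hasDerivAt_warp hα r).deriv

lemma deriv_deriv_warp {α : ℝ} (hα : α ≠ 0) (r : ℝ) :
    deriv (deriv (warp α)) r = -(2 * r * α ^ 2) / (α ^ 2 + r ^ 2) ^ 2 := by
  have hD : α ^ 2 + r ^ 2 ≠ 0 := by positivity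
  have h : HasDerivAt (fun x => α ^ 2 / (α ^ 2 + x ^ 2)) _ r :=
    (hasDerivAt_const r (α ^ 2)).div ((hasDerivAt_pow 2 r).const_add (α ^ 2)) hD
  rw [deriv_warp hα, h.deriv]
  ring

lemma neg_deriv_deriv_warp {α : ℝ} (hα : α ≠ 0) (r : ℝ) :
    -deriv (deriv (warp α)) r = 2 * r * deriv (warp α) r ^ 2 / α ^ 2 := by
  rw [deriv_deriv_warp hα, deriv_warp hα]
  have : α ^ 2 + r ^ 2 ≠ 0 := by positivity
  field_simp

lemma deriv_warp_sq_lt_one {α r : ℝ} (hα : α ≠ 0) (hr : r ≠ 0) : deriv (warp α) r ^ 2 < 1 := by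
  have hr2 : 0 < r ^ 2 := by positivity
  have h1 : α ^ 2 / (α ^ 2 + r ^ 2) < 1 := (div_lt_one (by positivity)).mpr (by linarith)
  rw [deriv_warp hα]
  exact pow_lt_one₀ (by positivity) h1 two_ne_zero

/-- For `α > 0` and every `r > 0`, the scalar curvature satisfies `R_α(r) > 8/(π²α²)`. -/
theorem stmt_4 (α : ℝ) (hα : 0 < α) (r : ℝ) (hr : 0 < r) :
    scalarCurv α r > 8 / (π ^ 2 * α ^ 2) := by
  set φ := warp α r
  set p := deriv (warp α) r ^ 2
  have hφ : 0 < φ := warp_pos hα hr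
  have hp : p < 1 := deriv_warp_sq_lt_one hα.ne' hr.ne'
  have hfirst : 4 * p / α ^ 2 ≤ -2 * deriv (deriv (warp α)) r / φ := by
    rw [le_div_iff₀ hφ]
    calc 4 * p / α ^ 2 * φ ≤ 4 * p / α ^ 2 * r := by
          gcongr
          exact (warp_lt_self hα hr).le
      _ = -2 * deriv (deriv (warp α)) r := by
          rw [neg_mul, ← mul_neg, neg_deriv_deriv_warp hα.ne']
          ring
  have hsecond : 4 * (1 - p) / (π ^ 2 * α ^ 2) < (1 - p) / φ ^ 2 := by
    have hφπ : φ ^ 2 < π ^ 2 * α ^ 2 / 4 := by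
      nlinarith [warp_lt_mul_pi_div_two hα r]
    rw [div_lt_div_iff₀ (by positivity) (by positivity)]
    nlinarith
  have hmix : 4 / (π ^ 2 * α ^ 2) ≤ 4 * p / α ^ 2 + 4 * (1 - p) / (π ^ 2 * α ^ 2) := by
    have hp0 : 0 ≤ p := sq_nonneg _
    have hπ : α ^ 2 ≤ π ^ 2 * α ^ 2 :=
      le_mul_of_one_le_left (by positivity) (by nlinarith [pi_gt_three])
    calc 4 / (π ^ 2 * α ^ 2) = 4 * p / (π ^ 2 * α ^ 2) + 4 * (1 - p) / (π ^ 2 * α ^ 2) := by ring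
      _ ≤ 4 * p / α ^ 2 + 4 * (1 - p) / (π ^ 2 * α ^ 2) := by gcongr
  show 2 * (-2 * deriv (deriv (warp α)) r / φ + (1 - p) / φ ^ 2) > 8 / (π ^ 2 * α ^ 2)
  have : 8 / (π ^ 2 * α ^ 2) = 2 * (4 / (π ^ 2 * α ^ 2)) := by ring
  linarith
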